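/- Let v be a vertex of a finite directed graph on n vertices, d ≥ 0, and suppose α, ω are integers with 1 < α ≤ r(v) ≤ ω, where r(v) is the number of vertices reachable from v. Define λ_d(v, x) = f_d(v) − γ̃_{d+1}(v) + (d+2)·(x − n_d(v)). Then the inverse closeness (n−1)·f(v)/(r(v)−1)² satisfies (n−1)·f(v)/(r(v)−1)² ≥ (n−1)·min( λ_d(v, α)/(α−1)², λ_d(v, ω)/(ω−1)² ). -/

import Mathlib

open Finset

variable {V : Type*}

/-- `steps r n v w` : there is a walk of length `n` from `v` to `w` along relation `r`. -/
def steps (r : V → V → Prop) : ℕ → V → V → Prop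
  | 0, v, w => v = w
  | n+1, v, w => ∃ u, r v u ∧ steps r n u w

/-- `w` is reachable from `v`. -/
def reach (r : V → V → Prop) (v w : V) : Prop := ∃ n, steps r n v w

/-- shortest-path distance (number of edges). -/
noncomputable def ddist (r : V → V → Prop) (v w : V) : ℕ := sInf {n | steps r n v w}

open scoped Classical in
/-- set of vertices reachable from `v`. -/
noncomputable def Rset (r : V → V → Prop) [Fintype V] (v : V) : Finset V :=
  univ.filter (fun w => reach r v w)

/-- number of vertices reachable from `v`. -/
noncomputable def rnum (r : V → V → Prop) [Fintype V] (v : V) : ℕ := (Rset r v).card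

/-- farness of `v`. -/
noncomputable def farn (r : V → V → Prop) [Fintype V] (v : V) : ℕ :=
  ∑ w ∈ Rset r v, ddist r v w

open scoped Classical in
/-- ball of radius `d` around `v`. -/
noncomputable def ball (r : V → V → Prop) [Fintype V] (v : V) (d : ℕ) : Finset V :=
  univ.filter (fun w => reach r v w ∧ ddist r v w ≤ d)

/-- number of vertices at distance at most `d` from `v`. -/
noncomputable def nball (r : V → V → Prop) [Fintype V] (v : V) (d : ℕ) : ℕ := (ball r v d).card

open scoped Classical in
/-- set of vertices at distance exactly `d` from `v`. -/
noncomputable def sphere (r : V → V → Prop) [Fintype V] (v : V) (d : ℕ) : Finset V :=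
  univ.filter (fun w => reach r v w ∧ ddist r v w = d)

/-- number of vertices at distance exactly `d` from `v`. -/
noncomputable def gam (r : V → V → Prop) [Fintype V] (v : V) (d : ℕ) : ℕ := (sphere r v d).card

/-- farness of `v` restricted to distance at most `d`. -/
noncomputable def fd (r : V → V → Prop) [Fintype V] (v : V) (d : ℕ) : ℕ :=
  ∑ w ∈ ball r v d, ddist r v w

open scoped Classical in
/-- out-degree of `u`. -/
noncomputable def outdeg (r : V → V → Prop) [Fintype V] (u : V) : ℕ :=
  (univ.filter (fun w => r u w)).card

/-- `gtil r v d` = upper bound γ̃_{d+1}(v) = Σ_{u : dist(v,u)=d} outdeg(u). -/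
noncomputable def gtil (r : V → V → Prop) [Fintype V] (v : V) (d : ℕ) : ℕ :=
  ∑ u ∈ sphere r v d, outdeg r u

/-!
Every vertex at distance `d + 1` from `v` is an out-neighbour of a vertex at distance `d`, so
there are at most `γ̃_{d+1}(v)` of them; all other reachable vertices outside the ball of
radius `d` are at distance at least `d + 2`. Hence `f(v) ≥ λ_d(v, r(v))`. Since
`λ_d(v, x) = A + (d + 2) x` is affine with nonnegative slope, the substitution `s = 1 / (x - 1)`
turns `λ_d(v, x) / (x - 1)²` into the quadratic `(A + d + 2) s² + (d + 2) s`, whose minimum over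
an interval of positive `s` is attained at an endpoint.
-/

section Paths

variable {r : V → V → Prop}

theorem steps_succ_right_iff {n : ℕ} {v w : V} :
    steps r (n + 1) v w ↔ ∃ u, steps r n v u ∧ r u w := by
  induction n generalizing v with
  | zero => simp [steps]
  | succ n ih =>
    constructor
    · rintro ⟨u, hvu, hs⟩
      obtain ⟨x, hx, hxw⟩ := ih.mp hs
      exact ⟨x, ⟨u, hvu, hx⟩, hxw⟩
    · rintro ⟨x, ⟨u, hvu, hx⟩, hxw⟩
      exact ⟨u, hvu, ih.mpr ⟨x, hx, hxw⟩⟩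

theorem steps_ddist {v w : V} (h : reach r v w) : steps r (ddist r v w) v w :=
  Nat.sInf_mem h

theorem ddist_le_of_steps {n : ℕ} {v w : V} (h : steps r n v w) : ddist r v w ≤ n :=
  Nat.sInf_le h

theorem ddist_le_ddist_add_one_of_rel {v u w : V} (hu : reach r v u) (huw : r u w) :
    ddist r v w ≤ ddist r v u + 1 :=
  ddist_le_of_steps (steps_succ_right_iff.mpr ⟨u, steps_ddist hu, huw⟩)

variable [Fintype V]

theorem mem_sphere {v w : V} {d : ℕ} : w ∈ sphere r v d ↔ reach r v w ∧ ddist r v w = d := by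
  classical
  simp [sphere]

theorem mem_ball {v w : V} {d : ℕ} : w ∈ ball r v d ↔ reach r v w ∧ ddist r v w ≤ d := by
  classical
  simp [ball]

theorem mem_Rset {v w : V} : w ∈ Rset r v ↔ reach r v w := by
  classical
  simp [Rset]

theorem exists_rel_of_mem_sphere_succ {v w : V} {d : ℕ} (hw : w ∈ sphere r v (d + 1)) :
    ∃ u ∈ sphere r v d, r u w := by
  obtain ⟨hvw, hdist⟩ := mem_sphere.mp hw
  obtain ⟨u, hvu, huw⟩ := steps_succ_right_iff.mp (hdist ▸ steps_ddist hvw)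
  have hu : reach r v u := ⟨d, hvu⟩
  have := ddist_le_ddist_add_one_of_rel hu huw
  exact ⟨u, mem_sphere.mpr ⟨hu, by have := ddist_le_of_steps hvu; omega⟩, huw⟩

theorem gam_succ_le_gtil (v : V) (d : ℕ) : gam r v (d + 1) ≤ gtil r v d := by
  classical
  have hsub : sphere r v (d + 1) ⊆ (sphere r v d).biUnion (fun u => univ.filter (r u ·)) := by
    intro w hw
    obtain ⟨u, hu, huw⟩ := exists_rel_of_mem_sphere_succ hw
    simpa using ⟨u, hu, huw⟩
  calc gam r v (d + 1) ≤ #((sphere r v d).biUnion (fun u => univ.filter (r u ·))) :=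
        card_le_card hsub
    _ ≤ ∑ u ∈ sphere r v d, #(univ.filter (r u ·)) := card_biUnion_le
    _ = gtil r v d := by simp only [gtil, outdeg]

theorem ball_subset_Rset (v : V) (d : ℕ) : ball r v d ⊆ Rset r v :=
  fun _ hw => mem_Rset.mpr (mem_ball.mp hw).1

theorem nball_le_rnum (v : V) (d : ℕ) : nball r v d ≤ rnum r v :=
  card_le_card (ball_subset_Rset v d)

theorem fd_add_mul_le_farn_add_gtil (v : V) (d : ℕ) :
    fd r v d + (d + 2) * (rnum r v - nball r v d) ≤ farn r v + gtil r v d := by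
  classical
  set S := Rset r v \ ball r v d
  have hS : #S = rnum r v - nball r v d := card_sdiff_of_subset (ball_subset_Rset v d)
  have hfarn : farn r v = fd r v d + ∑ w ∈ S, ddist r v w := by
    rw [farn, fd, ← sum_sdiff (ball_subset_Rset v d), add_comm]
  -- outside the ball, only the vertices of the sphere of radius `d + 1` are closer than `d + 2`
  have hpoint : ∀ w ∈ S, d + 2 ≤ ddist r v w + if ddist r v w = d + 1 then 1 else 0 := by
    intro w hw
    obtain ⟨hR, hB⟩ := mem_sdiff.mp hw
    have : d < ddist r v w := by
      by_contra! h
      exact hB (mem_ball.mpr ⟨mem_Rset.mp hR, h⟩)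
    split_ifs <;> omega
  have hshell : #(S.filter (ddist r v · = d + 1)) ≤ gam r v (d + 1) :=
    card_le_card fun w hw => by
      obtain ⟨hwS, hd⟩ := mem_filter.mp hw
      exact mem_sphere.mpr ⟨mem_Rset.mp (mem_sdiff.mp hwS).1, hd⟩
  have hsum : (d + 2) * #S ≤ ∑ w ∈ S, ddist r v w + gam r v (d + 1) :=
    calc (d + 2) * #S = ∑ _w ∈ S, (d + 2) := by rw [sum_const, smul_eq_mul, mul_comm]
      _ ≤ ∑ w ∈ S, (ddist r v w + if ddist r v w = d + 1 then 1 else 0) := sum_le_sum hpoint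
      _ ≤ ∑ w ∈ S, ddist r v w + gam r v (d + 1) := by
        rw [sum_add_distrib, sum_boole]
        exact Nat.add_le_add_left hshell _
  have := gam_succ_le_gtil (r := r) v d
  rw [hS] at hsum
  omega

end Paths

theorem min_le_mul_sq_add_mul {a b u C B : ℝ} (ha : 0 < a) (hau : a ≤ u) (hub : u ≤ b)
    (hB : 0 ≤ B) : min (C * a ^ 2 + B * a) (C * b ^ 2 + B * b) ≤ C * u ^ 2 + B * u := by
  -- `C * (u + a) + B` is the slope of the secant from `a` to `u`; if it is negative then `C < 0`
  -- and the secant from `u` to `b` is negative too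
  rcases le_or_gt 0 (C * (u + a) + B) with h | h
  · apply min_le_of_left_le
    nlinarith [mul_nonneg (sub_nonneg.mpr hau) h]
  · apply min_le_of_right_le
    have hC : C < 0 := by nlinarith
    have h2 : C * (b + u) + B < 0 := by nlinarith
    nlinarith [mul_nonneg (sub_nonneg.mpr hub) (neg_nonneg.mpr h2.le)]

theorem min_le_affine_div_sub_one_sq {A B x y z : ℝ} (hB : 0 ≤ B) (hx : 1 < x) (hxy : x ≤ y)
    (hyz : y ≤ z) :
    min ((A + B * x) / (x - 1) ^ 2) ((A + B * z) / (z - 1) ^ 2) ≤ (A + B * y) / (y - 1) ^ 2 := by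
  have hquad : ∀ t : ℝ, 1 < t →
      (A + B * t) / (t - 1) ^ 2 = (A + B) * (1 / (t - 1)) ^ 2 + B * (1 / (t - 1)) := by
    intro t ht
    have : t - 1 ≠ 0 := by linarith
    field_simp
    ring
  rw [hquad x hx, hquad y (by linarith), hquad z (by linarith), min_comm]
  exact min_le_mul_sq_add_mul (one_div_pos.mpr (by linarith))
    (one_div_le_one_div_of_le (by linarith) (by linarith))
    (one_div_le_one_div_of_le (by linarith) (by linarith)) hB

theorem inverse_closeness_lower_bound [Fintype V] (r : V → V → Prop) (v : V) (d : ℕ)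
    (α ω : ℕ) (hα : 1 < α) (h1 : α ≤ rnum r v) (h2 : rnum r v ≤ ω) :
    ((Fintype.card V : ℝ) - 1) * (farn r v : ℝ) / ((rnum r v : ℝ) - 1) ^ 2 ≥
      ((Fintype.card V : ℝ) - 1) *
        min
          (((fd r v d : ℝ) - (gtil r v d : ℝ) + (d + 2) * ((α : ℝ) - (nball r v d : ℝ)))
              / ((α : ℝ) - 1) ^ 2)
          (((fd r v d : ℝ) - (gtil r v d : ℝ) + (d + 2) * ((ω : ℝ) - (nball r v d : ℝ)))
              / ((ω : ℝ) - 1) ^ 2) := by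
  have hn : 1 < Fintype.card V := hα.trans_le (h1.trans (card_le_univ _))
  have hfarn : (fd r v d : ℝ) - gtil r v d + (d + 2) * ((rnum r v : ℝ) - nball r v d)
      ≤ farn r v := by
    have := fd_add_mul_le_farn_add_gtil (r := r) v d
    rw [← Nat.cast_le (α := ℝ)] at this
    push_cast [nball_le_rnum v d] at this
    linarith
  have haffine : ∀ t : ℝ, (fd r v d : ℝ) - gtil r v d + (d + 2) * (t - nball r v d)
      = ((fd r v d : ℝ) - gtil r v d - (d + 2) * nball r v d) + (d + 2) * t := fun t => by ring
  simp only [haffine] at hfarn ⊢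
  rw [ge_iff_le, mul_div_assoc]
  gcongr
  · exact sub_nonneg.mpr (by exact_mod_cast hn.le)
  calc _ ≤ _ := min_le_affine_div_sub_one_sq (by positivity) (by exact_mod_cast hα)
        (Nat.cast_le.mpr h1) (Nat.cast_le.mpr h2)
    _ ≤ _ := by gcongr
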